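/- Let γ ∈ (0,1], σ > 0 and θ₁ > 0. There exists a constant C > 0, depending only on γ, σ and θ₁, such that for every z ∈ [0, θ₁/2], every k ∈ ℤ³ with k ≠ 0, every t ≥ 0 and every measurable function b : [0,t] → [0,∞), one has exp(z⟨k,kt⟩^γ)·⟨k,kt⟩^σ · ∫₀^t exp(−θ₁·|k|·(t−s))·b(s) ds ≤ C·∫₀^t exp(−(θ₁/4)·(t−s))·exp(z⟨k,ks⟩^γ)·⟨k,ks⟩^σ·b(s) ds. -/

import Mathlib

/-- Euclidean norm of a lattice point `k ∈ ℤ³`, viewed as a vector of `ℝ³`. -/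
noncomputable def knorm (k : Fin 3 → ℤ) : ℝ := Real.sqrt (∑ i, ((k i : ℝ)) ^ 2)

/-- Japanese bracket `⟨k, kt⟩ = √(1 + |k|² + |kt|²)`. -/
noncomputable def jb (k : Fin 3 → ℤ) (t : ℝ) : ℝ :=
  Real.sqrt (1 + (∑ i, ((k i : ℝ)) ^ 2) + (∑ i, (t * (k i : ℝ)) ^ 2))

/-!
Write `⟨k,kt⟩` as the Euclidean length of `(1, k, tk)`: it is `|k|`-Lipschitz in `t`, so
`⟨k,kt⟩ ≤ ⟨k,ks⟩ + |k|(t-s)`. By subadditivity of `x ↦ x^γ` and `z ≤ θ₁/2` the exponential weight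
grows by at most `e^{θ₁/2} e^{θ₁|k|(t-s)/2}`; since `⟨k,ks⟩ ≥ 1` we have
`⟨k,kt⟩ ≤ ⟨k,ks⟩(1 + |k|(t-s))`, and `(1 + x)^σ ≤ C e^{θ₁x/4}` makes the polynomial weight grow by at
most `C e^{θ₁|k|(t-s)/4}`. This leaves `e^{-θ₁|k|(t-s)/4} ≤ e^{-θ₁(t-s)/4}` of the kernel, as
`|k| ≥ 1` on `ℤ³ \ {0}`; the pointwise bound then integrates against `b`.
-/

open Real MeasureTheory

theorem Real.sqrt_add_sq_mul_le_add {a c : ℝ} (ha : 0 ≤ a) (hc : 0 ≤ c) (s t : ℝ) :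
    √(a + t ^ 2 * c) ≤ √(a + s ^ 2 * c) + √c * |t - s| := by
  have hP : √(a + s ^ 2 * c) ^ 2 = a + s ^ 2 * c := sq_sqrt (by positivity)
  have hq : √c ^ 2 = c := sq_sqrt hc
  have hqs : √c * |s| ≤ √(a + s ^ 2 * c) := by
    rw [← sqrt_sq_eq_abs, ← sqrt_mul hc]
    exact sqrt_le_sqrt (by nlinarith)
  have hst : s * (t - s) ≤ |s| * |t - s| := by rw [← abs_mul]; exact le_abs_self _
  rw [sqrt_le_left (by positivity)]
  nlinarith [mul_le_mul_of_nonneg_right hqs (by positivity : 0 ≤ √c * |t - s|),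
    mul_le_mul_of_nonneg_left hst hc, sq_abs (t - s)]

theorem Real.rpow_le_rpow_add_one_add {γ A B x : ℝ} (hγ0 : 0 ≤ γ) (hγ1 : γ ≤ 1) (hA : 0 ≤ A)
    (hB : 0 ≤ B) (hx : 0 ≤ x) (hAB : A ≤ B + x) : A ^ γ ≤ B ^ γ + (1 + x) :=
  calc A ^ γ ≤ (B + (1 + x)) ^ γ := rpow_le_rpow hA (by linarith) hγ0
    _ ≤ B ^ γ + (1 + x) ^ γ := rpow_add_le_add_rpow hB (by linarith) hγ0 hγ1
    _ ≤ B ^ γ + (1 + x) := by gcongr; exact rpow_le_self_of_one_le (by linarith) hγ1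

theorem Real.one_add_rpow_le_mul_exp {σ c x : ℝ} (hσ : 0 < σ) (hc : 0 < c) (hx : 0 ≤ x) :
    (1 + x) ^ σ ≤ (1 + σ / c) ^ σ * exp (c * x) := by
  have hlin : 1 + x ≤ (1 + σ / c) * exp (c * x / σ) := by
    have hexp := add_one_le_exp (c * x / σ)
    have hprod : (1 + σ / c) * (1 + c * x / σ) = 1 + x + (σ / c + c * x / σ) := by
      field_simp; ring
    nlinarith [mul_le_mul_of_nonneg_left hexp (by positivity : 0 ≤ 1 + σ / c),
      (by positivity : 0 ≤ σ / c + c * x / σ)]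
  calc (1 + x) ^ σ ≤ ((1 + σ / c) * exp (c * x / σ)) ^ σ := by gcongr
    _ = (1 + σ / c) ^ σ * exp (c * x) := by
      rw [mul_rpow (by positivity) (exp_nonneg _), ← exp_mul, div_mul_cancel₀ _ hσ.ne']

theorem jb_eq_sqrt (k : Fin 3 → ℤ) (t : ℝ) :
    jb k t = √((1 + ∑ i, (k i : ℝ) ^ 2) + t ^ 2 * ∑ i, (k i : ℝ) ^ 2) := by
  simp only [jb, mul_pow, Finset.mul_sum]

theorem one_le_jb (k : Fin 3 → ℤ) (t : ℝ) : 1 ≤ jb k t := by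
  rw [jb_eq_sqrt, one_le_sqrt]
  have : 0 ≤ ∑ i, (k i : ℝ) ^ 2 := by positivity
  nlinarith [sq_nonneg t]

theorem jb_le_jb_add (k : Fin 3 → ℤ) (s t : ℝ) : jb k t ≤ jb k s + knorm k * |t - s| := by
  rw [jb_eq_sqrt, jb_eq_sqrt, knorm]
  exact sqrt_add_sq_mul_le_add (by positivity) (by positivity) s t

theorem one_le_knorm {k : Fin 3 → ℤ} (hk : k ≠ 0) : 1 ≤ knorm k := by
  obtain ⟨i, hi⟩ := Function.ne_iff.1 hk
  have hki : (1 : ℝ) ≤ (k i : ℝ) ^ 2 := by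
    exact_mod_cast (one_le_sq_iff_one_le_abs _).2 (Int.one_le_abs hi)
  rw [knorm, one_le_sqrt]
  exact hki.trans (Finset.single_le_sum (fun j _ => sq_nonneg (k j : ℝ)) (Finset.mem_univ i))

theorem exp_mul_rpow_mul_exp_neg_le {γ σ θ z A B K u : ℝ} (hγ0 : 0 ≤ γ) (hγ1 : γ ≤ 1)
    (hσ : 0 < σ) (hθ : 0 < θ) (hz0 : 0 ≤ z) (hz : z ≤ θ / 2) (hA : 0 ≤ A) (hB : 1 ≤ B)
    (hK : 1 ≤ K) (hu : 0 ≤ u) (hAB : A ≤ B + K * u) :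
    exp (z * A ^ γ) * A ^ σ * exp (-θ * K * u) ≤
      (exp (θ / 2) * (1 + σ / (θ / 4)) ^ σ) * (exp (-(θ / 4) * u) * exp (z * B ^ γ) * B ^ σ) := by
  have hKu : 0 ≤ K * u := by positivity
  have hexp : z * A ^ γ ≤ z * B ^ γ + θ / 2 + θ / 2 * (K * u) := by
    have := rpow_le_rpow_add_one_add hγ0 hγ1 hA (by linarith) hKu hAB
    nlinarith [mul_le_mul_of_nonneg_right hz hKu]
  have hpoly : A ^ σ ≤ B ^ σ * ((1 + σ / (θ / 4)) ^ σ * exp (θ / 4 * (K * u))) :=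
    calc A ^ σ ≤ (B * (1 + K * u)) ^ σ := by gcongr; nlinarith
      _ = B ^ σ * (1 + K * u) ^ σ := mul_rpow (by linarith) (by linarith)
      _ ≤ _ := by gcongr; exact one_add_rpow_le_mul_exp hσ (by positivity) hKu
  have hdecay : -(θ / 4) * (K * u) ≤ -(θ / 4) * u :=
    mul_le_mul_of_nonpos_left (le_mul_of_one_le_left hu hK) (by linarith)
  have hsplit : exp (θ / 2 * (K * u)) * exp (θ / 4 * (K * u)) * exp (-θ * K * u) =
      exp (-(θ / 4) * (K * u)) := by
    simp only [← exp_add]; ring_nf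
  calc exp (z * A ^ γ) * A ^ σ * exp (-θ * K * u)
      ≤ exp (z * B ^ γ + θ / 2 + θ / 2 * (K * u)) *
          (B ^ σ * ((1 + σ / (θ / 4)) ^ σ * exp (θ / 4 * (K * u)))) * exp (-θ * K * u) := by
        gcongr
    _ = (exp (θ / 2) * (1 + σ / (θ / 4)) ^ σ) *
          (exp (-(θ / 4) * (K * u)) * exp (z * B ^ γ) * B ^ σ) := by
        rw [exp_add, exp_add, ← hsplit]; ring
    _ ≤ _ := by gcongr

theorem MeasureTheory.ofReal_mul_setLIntegral_le {α : Type*} [MeasurableSpace α] {μ : Measure α}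
    {s : Set α} (hs : MeasurableSet s) {a c : ℝ} {f g : α → ℝ} (b : α → ENNReal) (ha : 0 ≤ a)
    (hc : 0 ≤ c) (hfg : ∀ x ∈ s, a * f x ≤ c * g x) :
    ENNReal.ofReal a * ∫⁻ x in s, ENNReal.ofReal (f x) * b x ∂μ ≤
      ENNReal.ofReal c * ∫⁻ x in s, ENNReal.ofReal (g x) * b x ∂μ := by
  rw [← lintegral_const_mul' _ _ ENNReal.ofReal_ne_top,
    ← lintegral_const_mul' _ _ ENNReal.ofReal_ne_top]
  refine setLIntegral_mono_ae' hs (Filter.Eventually.of_forall fun x hx => ?_)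
  rw [← mul_assoc, ← mul_assoc, ← ENNReal.ofReal_mul ha, ← ENNReal.ofReal_mul hc]
  exact mul_le_mul_left (ENNReal.ofReal_le_ofReal (hfg x hx)) _

/-- Integrated weight estimate converting the resolvent-kernel decay `e^{−θ₁|k|(t−s)}`
into the time-decaying kernel `e^{−(θ₁/4)(t−s)}` acting on weighted coefficients. -/
theorem integrated_weight_estimate {γ σ θ₁ : ℝ} (hγ0 : 0 < γ) (hγ1 : γ ≤ 1)
    (hσ : 0 < σ) (hθ : 0 < θ₁) :
    ∃ C : ℝ, 0 < C ∧ ∀ z : ℝ, 0 ≤ z → z ≤ θ₁ / 2 → ∀ k : Fin 3 → ℤ, k ≠ 0 →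
      ∀ t : ℝ, 0 ≤ t → ∀ b : ℝ → ENNReal, Measurable b →
        ENNReal.ofReal (Real.exp (z * jb k t ^ γ) * jb k t ^ σ) *
            ∫⁻ s in Set.Icc (0 : ℝ) t,
              ENNReal.ofReal (Real.exp (-θ₁ * knorm k * (t - s))) * b s ≤
          ENNReal.ofReal C *
            ∫⁻ s in Set.Icc (0 : ℝ) t,
              ENNReal.ofReal (Real.exp (-(θ₁ / 4) * (t - s)) *
                Real.exp (z * jb k s ^ γ) * jb k s ^ σ) * b s := by
  refine ⟨exp (θ₁ / 2) * (1 + σ / (θ₁ / 4)) ^ σ, by positivity,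
    fun z hz0 hz k hk t _ b _ => ?_⟩
  have hjb := one_le_jb k t
  refine ofReal_mul_setLIntegral_le measurableSet_Icc b (by positivity) (by positivity)
    fun s ⟨_, hst⟩ => ?_
  have hlip := jb_le_jb_add k s t
  rw [abs_of_nonneg (sub_nonneg.2 hst)] at hlip
  exact exp_mul_rpow_mul_exp_neg_le hγ0.le hγ1 hσ hθ hz0 hz (by linarith) (one_le_jb k s)
    (one_le_knorm hk) (sub_nonneg.2 hst) hlip
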